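/- arXiv:2603.12974 — 2 statements merged into one kernel-verified Lean document; each statement's English description precedes it below -/
import Mathlib

section
/- Let k be a field, q ∈ k nonzero, and Λ = k⟨x,y,z⟩/(x², y², z², yz, xy + q·yx, xz − zx, zy − zx). Then the left ideal Λ·(yx) generated by yx is one-dimensional as a k-vector space, spanned by yx. -/
variable (k : Type) [Field k] (q : k)

/-- The defining relations of the Ringel–Zhang algebra. -/
inductive LamRel (k : Type) [Field k] (q : k) :
    FreeAlgebra k (Fin 3) → FreeAlgebra k (Fin 3) → Prop
  | x_sq : LamRel k q ((FreeAlgebra.ι k 0) * (FreeAlgebra.ι k 0)) 0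
  | y_sq : LamRel k q ((FreeAlgebra.ι k 1) * (FreeAlgebra.ι k 1)) 0
  | z_sq : LamRel k q ((FreeAlgebra.ι k 2) * (FreeAlgebra.ι k 2)) 0
  | yz : LamRel k q ((FreeAlgebra.ι k 1) * (FreeAlgebra.ι k 2)) 0
  | xy : LamRel k q ((FreeAlgebra.ι k 0) * (FreeAlgebra.ι k 1)
      + q • ((FreeAlgebra.ι k 1) * (FreeAlgebra.ι k 0))) 0
  | xz : LamRel k q ((FreeAlgebra.ι k 0) * (FreeAlgebra.ι k 2)
      - (FreeAlgebra.ι k 2) * (FreeAlgebra.ι k 0)) 0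
  | zy : LamRel k q ((FreeAlgebra.ι k 2) * (FreeAlgebra.ι k 1)
      - (FreeAlgebra.ι k 2) * (FreeAlgebra.ι k 0)) 0

/-- The Ringel–Zhang algebra Λ = k⟨x,y,z⟩/(x²,y²,z²,yz,xy+q·yx,xz−zx,zy−zx). -/
def Lam (k : Type) [Field k] (q : k) : Type := RingQuot (LamRel k q)

instance : Ring (Lam k q) := inferInstanceAs (Ring (RingQuot (LamRel k q)))
instance : Algebra k (Lam k q) := inferInstanceAs (Algebra k (RingQuot (LamRel k q)))

/-- The image of the generator x in Λ. -/
def Lam.x : Lam k q := RingQuot.mkAlgHom k (LamRel k q) (FreeAlgebra.ι k 0)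
/-- The image of the generator y in Λ. -/
def Lam.y : Lam k q := RingQuot.mkAlgHom k (LamRel k q) (FreeAlgebra.ι k 1)
/-- The image of the generator z in Λ. -/
def Lam.z : Lam k q := RingQuot.mkAlgHom k (LamRel k q) (FreeAlgebra.ι k 2)

/-!
Each generator kills yx: `x(yx) = (xy)x = -q·y(xx) = 0`, `y(yx) = (yy)x = 0` and
`z(yx) = (zy)x = (zx)x = 0`, so `Λ·yx = k·yx`. That `yx ≠ 0` is seen in the action
of `Λ` on the four-dimensional quotient `Λ/(z) = k⟨x,y⟩/(x², y², xy + q·yx)`.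
-/

theorem Submodule.restrictScalars_span_singleton_eq_of_mul_mem {R A : Type*} [CommSemiring R]
    [Semiring A] [Algebra R A] {v : A} (h : ∀ a : A, a * v ∈ R ∙ v) :
    (span A {v}).restrictScalars R = R ∙ v := by
  refine le_antisymm (fun w hw => ?_) (span_le_restrictScalars R A {v})
  obtain ⟨a, rfl⟩ := mem_span_singleton.mp hw
  exact h a

theorem Algebra.mul_mem_span_singleton_of_adjoin_eq_top {R A : Type*} [CommSemiring R]
    [Semiring A] [Algebra R A] {s : Set A} (hs : adjoin R s = ⊤) {v : A}
    (hv : ∀ g ∈ s, g * v ∈ R ∙ v) (a : A) : a * v ∈ R ∙ v := by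
  have ha : a ∈ adjoin R s := hs ▸ Algebra.mem_top
  induction ha using adjoin_induction with
  | mem g hg => exact hv g hg
  | algebraMap r =>
    rw [Algebra.algebraMap_eq_smul_one, smul_mul_assoc, one_mul]
    exact Submodule.smul_mem _ r (Submodule.mem_span_singleton_self v)
  | add b c _ _ hb hc => exact add_mul b c v ▸ Submodule.add_mem _ hb hc
  | mul b c _ _ hb _ =>
    obtain ⟨r, hr⟩ := Submodule.mem_span_singleton.mp ‹c * v ∈ R ∙ v›
    rw [mul_assoc, ← hr, mul_smul_comm]
    exact Submodule.smul_mem _ r hb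

namespace Lam

def mk : FreeAlgebra k (Fin 3) →ₐ[k] Lam k q := RingQuot.mkAlgHom k (LamRel k q)

variable {k q}

theorem mk_surjective : Function.Surjective (mk k q) :=
  RingQuot.mkAlgHom_surjective k (LamRel k q)

theorem mk_eq_mk_of_rel {a b : FreeAlgebra k (Fin 3)} (h : LamRel k q a b) :
    mk k q a = mk k q b :=
  RingQuot.mkAlgHom_rel k h

theorem mk_ι_zero : mk k q (FreeAlgebra.ι k 0) = x k q := rfl

theorem mk_ι_one : mk k q (FreeAlgebra.ι k 1) = y k q := rfl

theorem mk_ι_two : mk k q (FreeAlgebra.ι k 2) = z k q := rfl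

theorem adjoin_range_mk_ι : Algebra.adjoin k (Set.range (mk k q ∘ FreeAlgebra.ι k)) = ⊤ := by
  rw [Set.range_comp, Algebra.adjoin_image, FreeAlgebra.adjoin_range_ι, Algebra.map_top,
    AlgHom.range_eq_top]
  exact mk_surjective

theorem x_mul_x : x k q * x k q = 0 := by
  simpa only [map_mul, map_zero, mk_ι_zero] using mk_eq_mk_of_rel (LamRel.x_sq (k := k) (q := q))

theorem y_mul_y : y k q * y k q = 0 := by
  simpa only [map_mul, map_zero, mk_ι_one] using mk_eq_mk_of_rel (LamRel.y_sq (k := k) (q := q))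

theorem x_mul_y : x k q * y k q = -(q • (y k q * x k q)) := by
  rw [eq_neg_iff_add_eq_zero]
  simpa only [map_add, map_mul, map_smul, map_zero, mk_ι_zero, mk_ι_one] using
    mk_eq_mk_of_rel (LamRel.xy (k := k) (q := q))

theorem z_mul_y : z k q * y k q = z k q * x k q := by
  rw [← sub_eq_zero]
  simpa only [map_sub, map_mul, map_zero, mk_ι_zero, mk_ι_one, mk_ι_two] using
    mk_eq_mk_of_rel (LamRel.zy (k := k) (q := q))

theorem x_mul_yx : x k q * (y k q * x k q) = 0 := by
  rw [← mul_assoc, x_mul_y, neg_mul, smul_mul_assoc, mul_assoc, x_mul_x, mul_zero, smul_zero,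
    neg_zero]

theorem y_mul_yx : y k q * (y k q * x k q) = 0 := by
  rw [← mul_assoc, y_mul_y, zero_mul]

theorem z_mul_yx : z k q * (y k q * x k q) = 0 := by
  rw [← mul_assoc, z_mul_y, mul_assoc, x_mul_x, mul_zero]

theorem mul_yx_mem_span (a : Lam k q) : a * (y k q * x k q) ∈ k ∙ (y k q * x k q) := by
  refine Algebra.mul_mem_span_singleton_of_adjoin_eq_top adjoin_range_mk_ι ?_ a
  rintro _ ⟨i, rfl⟩
  have h : mk k q (FreeAlgebra.ι k i) * (y k q * x k q) = 0 := by
    fin_cases i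
    exacts [x_mul_yx, y_mul_yx, z_mul_yx]
  exact h ▸ zero_mem _

variable (k q) in
/- Left multiplication by x, y, z on Λ/(z), which has basis 1, x, y, yx; the entry -q records
xy = -q yx. -/
def repGen : Fin 3 → Matrix (Fin 4) (Fin 4) k
  | 0 => !![0, 0, 0, 0; 1, 0, 0, 0; 0, 0, 0, 0; 0, 0, -q, 0]
  | 1 => !![0, 0, 0, 0; 0, 0, 0, 0; 1, 0, 0, 0; 0, 1, 0, 0]
  | 2 => 0

theorem repGen_respects_rel ⦃a b : FreeAlgebra k (Fin 3)⦄ (h : LamRel k q a b) :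
    FreeAlgebra.lift k (repGen k q) a = FreeAlgebra.lift k (repGen k q) b := by
  cases h <;> ext i j <;> fin_cases i <;> fin_cases j <;>
    simp [repGen, Matrix.mul_apply, Fin.sum_univ_four]

variable (k q) in
noncomputable def rep : Lam k q →ₐ[k] Matrix (Fin 4) (Fin 4) k :=
  RingQuot.liftAlgHom k ⟨FreeAlgebra.lift k (repGen k q), repGen_respects_rel⟩

theorem rep_mk_ι (i : Fin 3) : rep k q (mk k q (FreeAlgebra.ι k i)) = repGen k q i :=
  (RingQuot.liftAlgHom_mkAlgHom_apply k _ repGen_respects_rel _).trans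
    (FreeAlgebra.lift_ι_apply _ _)

theorem yx_ne_zero : y k q * x k q ≠ 0 := by
  intro h
  have h' := congrArg (rep k q) h
  rw [map_mul, map_zero, ← mk_ι_zero, ← mk_ι_one, rep_mk_ι, rep_mk_ι] at h'
  simpa [repGen, Matrix.mul_apply, Fin.sum_univ_four] using congrFun (congrFun h' 3) 0

end Lam

theorem stmt4 :
    Lam.y k q * Lam.x k q ≠ 0 ∧
    (Submodule.span (Lam k q) {Lam.y k q * Lam.x k q}).restrictScalars k
      = Submodule.span k {Lam.y k q * Lam.x k q} ∧
    Module.finrank k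
      ((Submodule.span (Lam k q) {Lam.y k q * Lam.x k q}).restrictScalars k) = 1 := by
  have hne : Lam.y k q * Lam.x k q ≠ 0 := Lam.yx_ne_zero
  have hspan :=
    Submodule.restrictScalars_span_singleton_eq_of_mul_mem (Lam.mul_yx_mem_span (q := q))
  exact ⟨hne, hspan, hspan ▸ finrank_span_singleton hne⟩
end

section
/- Let k be a field, q ∈ k nonzero, and Λ = k⟨x,y,z⟩/(x², y², z², yz, xy + q·yx, xz − zx, zy − zx). Then the images of 1, x, y, z, yx, zx form a k-basis of Λ; in particular dim_k Λ = 6. -/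
variable (k : Type) [Field k] (q : k)

/-! Linear independence of the six monomials is read off from the left regular representation
`Λ → M₆(k)`, written down by hand: it sends them to matrices whose first columns are the standard
basis vectors. They span because their span contains `1` and, by the defining relations, is stable
under left multiplication by the generators `x`, `y`, `z`. -/

theorem Submodule.eq_top_of_one_mem_of_mul_mem {R A : Type*} [CommSemiring R] [Semiring A]
    [Algebra R A] {s : Set A} (hs : Algebra.adjoin R s = ⊤) (M : Submodule R A)
    (one_mem : (1 : A) ∈ M) (mul_mem : ∀ a ∈ s, ∀ m ∈ M, a * m ∈ M) : M = ⊤ := by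
  let stabilizer : Subalgebra R A :=
    { carrier := {a | ∀ m ∈ M, a * m ∈ M}
      mul_mem' := fun ha hb m hm => by rw [mul_assoc]; exact ha _ (hb m hm)
      add_mem' := fun ha hb m hm => by rw [add_mul]; exact M.add_mem (ha m hm) (hb m hm)
      algebraMap_mem' := fun r m hm => by rw [← Algebra.smul_def]; exact M.smul_mem r hm }
  have stabilizer_eq_top : stabilizer = ⊤ := eq_top_iff.2 (hs ▸ Algebra.adjoin_le mul_mem)
  refine eq_top_iff.2 fun a _ => ?_
  have ha : a ∈ stabilizer := stabilizer_eq_top ▸ Algebra.mem_top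
  simpa using ha 1 one_mem

namespace Lam

variable {k q}

theorem z_mul_z : z k q * z k q = 0 :=
  (map_mul _ _ _).symm.trans ((RingQuot.mkAlgHom_rel k LamRel.z_sq).trans (map_zero _))

theorem y_mul_z : y k q * z k q = 0 :=
  (map_mul _ _ _).symm.trans ((RingQuot.mkAlgHom_rel k LamRel.yz).trans (map_zero _))

theorem x_mul_z : x k q * z k q = z k q * x k q := by
  refine sub_eq_zero.1 ?_
  have h := RingQuot.mkAlgHom_rel k (LamRel.xz (k := k) (q := q))
  simp only [map_sub, map_mul, map_zero] at h
  exact h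

theorem mul_x_mul_x (a : Lam k q) : a * x k q * x k q = 0 := by
  rw [mul_assoc, x_mul_x, mul_zero]

variable (k q)

noncomputable def monomial : Fin 6 → Lam k q :=
  ![1, x k q, y k q, z k q, y k q * x k q, z k q * x k q]

theorem adjoin_x_y_z : Algebra.adjoin k ({x k q, y k q, z k q} : Set (Lam k q)) = ⊤ := by
  rw [eq_top_iff]
  rintro a -
  obtain ⟨p, rfl⟩ := RingQuot.mkAlgHom_surjective k (LamRel k q) a
  induction p using FreeAlgebra.induction with
  | grade0 r => rw [AlgHom.commutes]; exact Subalgebra.algebraMap_mem _ r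
  | grade1 i =>
    apply Algebra.subset_adjoin
    fin_cases i
    exacts [Or.inl rfl, Or.inr (Or.inl rfl), Or.inr (Or.inr rfl)]
  | mul a b ha hb => rw [map_mul]; exact Subalgebra.mul_mem _ ha hb
  | add a b ha hb => rw [map_add]; exact Subalgebra.add_mem _ ha hb

variable {k q} in
theorem mul_monomial_mem_span {a : Lam k q} (ha : a ∈ ({x k q, y k q, z k q} : Set (Lam k q)))
    (j : Fin 6) : a * monomial k q j ∈ Submodule.span k (Set.range (monomial k q)) := by
  rcases ha with rfl | rfl | rfl <;> fin_cases j <;>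
    simp only [monomial, Fin.isValue, Fin.zero_eta, Fin.mk_one, Fin.reduceFinMk,
      Matrix.cons_val, mul_one, ← mul_assoc, x_mul_x, y_mul_y, z_mul_z, y_mul_z, x_mul_y,
      x_mul_z, z_mul_y, mul_x_mul_x, zero_mul, neg_mul, smul_mul_assoc, smul_zero, neg_zero]
  all_goals first
    | exact Submodule.zero_mem _
    | exact Submodule.neg_mem _ (Submodule.smul_mem _ _ (Submodule.subset_span (by simp)))
    | exact Submodule.subset_span (by simp)

theorem span_range_monomial : Submodule.span k (Set.range (monomial k q)) = ⊤ :=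
  Submodule.eq_top_of_one_mem_of_mul_mem (adjoin_x_y_z k q) _ (Submodule.subset_span ⟨0, rfl⟩)
    fun a ha _ hm =>
      (Submodule.span_le (p := (Submodule.span k _).comap (LinearMap.mulLeft k a))).2
        (Set.range_subset_iff.2 (mul_monomial_mem_span ha)) hm

/- Left multiplication by `x`, `y`, `z` in the basis `1, x, y, z, yx, zx`; e.g. column 2 of
`matX` records `x * y = -q • yx`. -/
noncomputable def matX : Matrix (Fin 6) (Fin 6) k :=
  Matrix.single 1 0 1 + Matrix.single 4 2 (-q) + Matrix.single 5 3 1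

noncomputable def matY : Matrix (Fin 6) (Fin 6) k :=
  Matrix.single 2 0 1 + Matrix.single 4 1 1

noncomputable def matZ : Matrix (Fin 6) (Fin 6) k :=
  Matrix.single 3 0 1 + Matrix.single 5 1 1 + Matrix.single 5 2 1

theorem matrices_respect_rel {a b : FreeAlgebra k (Fin 3)} (h : LamRel k q a b) :
    FreeAlgebra.lift k ![matX k q, matY k, matZ k] a =
      FreeAlgebra.lift k ![matX k q, matY k, matZ k] b := by
  cases h <;> simp [matX, matY, matZ, mul_add, add_mul, Matrix.smul_single,
    ← Matrix.single_add]

noncomputable def toMatrix : Lam k q →ₐ[k] Matrix (Fin 6) (Fin 6) k :=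
  RingQuot.liftAlgHom k ⟨_, fun _ _ => matrices_respect_rel k q⟩

theorem toMatrix_mkAlgHom (p : FreeAlgebra k (Fin 3)) :
    toMatrix k q (RingQuot.mkAlgHom k (LamRel k q) p) =
      FreeAlgebra.lift k ![matX k q, matY k, matZ k] p :=
  RingQuot.liftAlgHom_mkAlgHom_apply k _ _ p

theorem toMatrix_x : toMatrix k q (x k q) = matX k q :=
  (toMatrix_mkAlgHom k q _).trans (by simp)

theorem toMatrix_y : toMatrix k q (y k q) = matY k :=
  (toMatrix_mkAlgHom k q _).trans (by simp)

theorem toMatrix_z : toMatrix k q (z k q) = matZ k :=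
  (toMatrix_mkAlgHom k q _).trans (by simp)

noncomputable def firstColumn : Lam k q →ₗ[k] Fin 6 → k :=
  LinearMap.pi fun i => Matrix.entryLinearMap k k i 0 ∘ₗ (toMatrix k q).toLinearMap

theorem firstColumn_monomial (j : Fin 6) : firstColumn k q (monomial k q j) = Pi.single j 1 := by
  ext i
  fin_cases j <;> fin_cases i <;>
    simp [firstColumn, monomial, toMatrix_x, toMatrix_y, toMatrix_z, matX, matY, matZ,
      Matrix.mul_apply, Matrix.single_apply]

theorem linearIndependent_monomial : LinearIndependent k (monomial k q) := by
  refine LinearIndependent.of_comp (firstColumn k q) ?_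
  convert (Pi.basisFun k (Fin 6)).linearIndependent
  ext1 j
  simp [firstColumn_monomial]

noncomputable def basisMonomial : Module.Basis (Fin 6) k (Lam k q) :=
  .mk (linearIndependent_monomial k q) (span_range_monomial k q).ge

theorem coe_basisMonomial : ⇑(basisMonomial k q) = monomial k q :=
  Module.Basis.coe_mk _ _

end Lam

theorem stmt5 :
    (∃ b : Module.Basis (Fin 6) k (Lam k q),
      ⇑b = ![1, Lam.x k q, Lam.y k q, Lam.z k q,
             Lam.y k q * Lam.x k q, Lam.z k q * Lam.x k q]) ∧
    Module.finrank k (Lam k q) = 6 :=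
  ⟨⟨Lam.basisMonomial k q, Lam.coe_basisMonomial k q⟩,
    by rw [Module.finrank_eq_card_basis (Lam.basisMonomial k q), Fintype.card_fin]⟩
end
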